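/- Let {b_j}_{j∈J} be an orthonormal basis of H₂ and let T ⊆ J be finite. Then the set F(T) = { v ∈ H₁ ⊗ H₂ : ‖v‖ = 1 and, writing v = Σ_j v_j ⊗ b_j with v_j ∈ H₁, the family {v_j}_{j∈T} is linearly independent } is open in the unit sphere of H₁ ⊗ H₂ (with the norm topology). -/

import Mathlib

open scoped InnerProductSpace

noncomputable section

/-- The (completed) Hilbert tensor product of two complex Hilbert spaces `H₁`, `H₂`,
presented as a Hilbert space `H` together with a bilinear map `tmul` (elementary tensors)
whose inner products multiply, whose elementary tensors span a dense subspace, and together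
with the tensor product `map A B = A ⊗ B` of bounded operators. -/
structure HilbertTensor (H₁ H₂ H : Type*)
    [NormedAddCommGroup H₁] [InnerProductSpace ℂ H₁] [CompleteSpace H₁]
    [NormedAddCommGroup H₂] [InnerProductSpace ℂ H₂] [CompleteSpace H₂]
    [NormedAddCommGroup H] [InnerProductSpace ℂ H] [CompleteSpace H] where
  tmul : H₁ →ₗ[ℂ] H₂ →ₗ[ℂ] H
  inner_tmul : ∀ x₁ y₁ x₂ y₂, ⟪tmul x₁ y₁, tmul x₂ y₂⟫_ℂ = ⟪x₁, x₂⟫_ℂ * ⟪y₁, y₂⟫_ℂ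
  dense_span : Dense (↑(Submodule.span ℂ {z : H | ∃ x y, z = tmul x y}) : Set H)
  map : (H₁ →L[ℂ] H₁) → (H₂ →L[ℂ] H₂) → (H →L[ℂ] H)
  map_tmul : ∀ A B x y, map A B (tmul x y) = tmul (A x) (B y)

variable {H₁ H₂ H : Type*}
  [NormedAddCommGroup H₁] [InnerProductSpace ℂ H₁] [CompleteSpace H₁]
  [NormedAddCommGroup H₂] [InnerProductSpace ℂ H₂] [CompleteSpace H₂]
  [NormedAddCommGroup H] [InnerProductSpace ℂ H] [CompleteSpace H]

/-- `v` is cyclic for the first factor: `{(A ⊗ I) v : A bounded on H₁}` is dense in `H`. -/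
def HilbertTensor.CyclicFst (T : HilbertTensor H₁ H₂ H) (v : H) : Prop :=
  Dense (Set.range fun A : H₁ →L[ℂ] H₁ => T.map A 1 v)

/-- An orthogonal projection on a Hilbert space: a self-adjoint idempotent bounded operator. -/
def IsONProj {E : Type*} [NormedAddCommGroup E] [InnerProductSpace ℂ E] [CompleteSpace E]
    (P : E →L[ℂ] E) : Prop :=
  IsSelfAdjoint P ∧ P ∘L P = P

/-- The algebra of the second factor is maximally correlated with the algebra of the first
factor in the state `v`. -/
def HilbertTensor.MaxCorrSndFst (T : HilbertTensor H₁ H₂ H) (v : H) : Prop :=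
  ∀ P' : H₂ →L[ℂ] H₂, IsONProj P' → P' ≠ 0 → ∀ ε : ℝ, 0 < ε →
    ∃ P : H₁ →L[ℂ] H₁, IsONProj P ∧ P ≠ 0 ∧
      0 < (⟪v, T.map P 1 v⟫_ℂ).re ∧
      (1 - ε) * (⟪v, T.map P 1 v⟫_ℂ).re ≤ (⟪v, T.map P P' v⟫_ℂ).re

/-- The orthogonal projection onto the span of a vector, as an operator `E →L[ℂ] E`. -/
def projSpan {E : Type*} [NormedAddCommGroup E] [InnerProductSpace ℂ E] [CompleteSpace E]
    (w : E) : E →L[ℂ] E :=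
  (ℂ ∙ w).subtypeL ∘L (ℂ ∙ w).orthogonalProjectionOnto

/-! The coefficient `v_j` of `v = Σ_j v_j ⊗ b_j` is `A_j† v`, where `A_j x = x ⊗ b_j` is an
isometry, so it depends continuously on `v`. The expansion exists because the tensors `a_i ⊗ b_j`
of two Hilbert bases form a Hilbert basis of `H` (elementary tensors span a dense subspace), and it
is unique because `A_j† (x ⊗ b_k) = δ_jk x`. Hence `F(T)` is the preimage of the open set of
linearly independent finite families under a continuous map. -/

theorem HilbertBasis.mem_of_forall_map_mem {ι 𝕜 E F : Type*} [RCLike 𝕜]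
    [NormedAddCommGroup E] [InnerProductSpace 𝕜 E] [AddCommGroup F] [Module 𝕜 F]
    [TopologicalSpace F] [IsTopologicalAddGroup F] [ContinuousConstSMul 𝕜 F]
    (a : HilbertBasis ι 𝕜 E) (L : E →L[𝕜] F) {p : Submodule 𝕜 F} (hp : IsClosed (p : Set F))
    (h : ∀ i, L (a i) ∈ p) (x : E) : L x ∈ p := by
  have hspan : Submodule.span 𝕜 (Set.range a) ≤ p.comap (L : E →ₗ[𝕜] F) :=
    Submodule.span_le.mpr (Set.range_subset_iff.mpr h)
  have hclosure := Submodule.topologicalClosure_minimal _ hspan (hp.preimage L.continuous)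
  rw [a.dense_span] at hclosure
  exact hclosure Submodule.mem_top

namespace HilbertTensor

variable (T : HilbertTensor H₁ H₂ H)

theorem norm_tmul (x : H₁) (y : H₂) : ‖T.tmul x y‖ = ‖x‖ * ‖y‖ := by
  have h := T.inner_tmul x y x y
  simp only [inner_self_eq_norm_sq_to_K] at h
  have hsq : ‖T.tmul x y‖ ^ 2 = (‖x‖ * ‖y‖) ^ 2 := by rw [mul_pow]; exact_mod_cast h
  exact (pow_left_inj₀ (norm_nonneg _) (by positivity) two_ne_zero).mp hsq

def tmulRight (y : H₂) : H₁ →L[ℂ] H :=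
  LinearMap.mkContinuous (T.tmul.flip y) ‖y‖ fun x => by
    rw [LinearMap.flip_apply, T.norm_tmul, mul_comm]

def tmulLeft (x : H₁) : H₂ →L[ℂ] H :=
  LinearMap.mkContinuous (T.tmul x) ‖x‖ fun y => by rw [T.norm_tmul]

@[simp] theorem tmulRight_apply (y : H₂) (x : H₁) : T.tmulRight y x = T.tmul x y := rfl

@[simp] theorem tmulLeft_apply (x : H₁) (y : H₂) : T.tmulLeft x y = T.tmul x y := rfl

def coeff (y : H₂) : H →L[ℂ] H₁ := ContinuousLinearMap.adjoint (T.tmulRight y)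

theorem inner_coeff_right (y : H₂) (v : H) (x : H₁) :
    ⟪x, T.coeff y v⟫_ℂ = ⟪T.tmul x y, v⟫_ℂ :=
  ContinuousLinearMap.adjoint_inner_right _ x v

theorem coeff_tmul (y y' : H₂) (x : H₁) : T.coeff y (T.tmul x y') = ⟪y, y'⟫_ℂ • x := by
  refine ext_inner_left ℂ fun z => ?_
  rw [inner_coeff_right, inner_tmul, inner_smul_right, mul_comm]

theorem orthonormal_tmul {I J : Type*} {a : I → H₁} {b : J → H₂} (ha : Orthonormal ℂ a)
    (hb : Orthonormal ℂ b) : Orthonormal ℂ fun p : I × J => T.tmul (a p.1) (b p.2) := by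
  classical
  rw [orthonormal_iff_ite] at ha hb ⊢
  rintro ⟨i, j⟩ ⟨i', j'⟩
  rw [T.inner_tmul, ha, hb]
  by_cases hi : i = i' <;> by_cases hj : j = j' <;> simp [hi, hj]

theorem topologicalClosure_span_tmul_eq_top {I J : Type*} (a : HilbertBasis I ℂ H₁)
    (b : HilbertBasis J ℂ H₂) :
    (Submodule.span ℂ (Set.range fun p : I × J => T.tmul (a p.1) (b p.2))).topologicalClosure
      = ⊤ := by
  set p := (Submodule.span ℂ (Set.range fun p : I × J => T.tmul (a p.1) (b p.2))).topologicalClosure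
  have hp : IsClosed (p : Set H) := Submodule.isClosed_topologicalClosure _
  have hbasis : ∀ i j, T.tmul (a i) (b j) ∈ p := fun i j =>
    Submodule.le_topologicalClosure _ (Submodule.subset_span ⟨(i, j), rfl⟩)
  have htmul : ∀ x y, T.tmul x y ∈ p := fun x y =>
    a.mem_of_forall_map_mem (T.tmulRight y) hp
      (fun i => b.mem_of_forall_map_mem (T.tmulLeft (a i)) hp (hbasis i) y) x
  have hspan : Submodule.span ℂ {z : H | ∃ x y, z = T.tmul x y} ≤ p :=
    Submodule.span_le.mpr fun _ ⟨x, y, hz⟩ => hz ▸ htmul x y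
  rw [eq_top_iff, ← Submodule.dense_iff_topologicalClosure_eq_top.mp T.dense_span]
  exact Submodule.topologicalClosure_minimal _ hspan hp

def hilbertBasisTmul {I J : Type*} (a : HilbertBasis I ℂ H₁) (b : HilbertBasis J ℂ H₂) :
    HilbertBasis (I × J) ℂ H :=
  HilbertBasis.mk (T.orthonormal_tmul a.orthonormal b.orthonormal)
    (T.topologicalClosure_span_tmul_eq_top a b).ge

@[simp] theorem hilbertBasisTmul_apply {I J : Type*} (a : HilbertBasis I ℂ H₁)
    (b : HilbertBasis J ℂ H₂) (p : I × J) :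
    T.hilbertBasisTmul a b p = T.tmul (a p.1) (b p.2) :=
  congrFun (HilbertBasis.coe_mk _ _) p

theorem hasSum_tmul_coeff {J : Type*} (b : HilbertBasis J ℂ H₂) (v : H) :
    HasSum (fun j => T.tmul (T.coeff (b j) v) (b j)) v := by
  obtain ⟨I, a, -⟩ := exists_hilbertBasis ℂ H₁
  have hsum : HasSum (fun p : J × I => ⟪T.tmul (a p.2) (b p.1), v⟫_ℂ • T.tmul (a p.2) (b p.1))
      v := by
    have h := (T.hilbertBasisTmul a b).hasSum_repr v
    simp only [HilbertBasis.repr_apply_apply, hilbertBasisTmul_apply] at h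
    exact ((Equiv.prodComm J I).hasSum_iff.mpr h :)
  refine hsum.prod_fiberwise fun j => ?_
  have hfiber := (T.tmulRight (b j)).hasSum (a.hasSum_repr (T.coeff (b j) v))
  simpa only [HilbertBasis.repr_apply_apply, inner_coeff_right, map_smul, tmulRight_apply]
    using hfiber

theorem eq_coeff_of_hasSum {J : Type*} (b : HilbertBasis J ℂ H₂) {f : J → H₁} {v : H}
    (hf : HasSum (fun j => T.tmul (f j) (b j)) v) (j : J) : f j = T.coeff (b j) v := by
  classical
  have hcoeff := (T.coeff (b j)).hasSum hf
  simp only [coeff_tmul, orthonormal_iff_ite.mp b.orthonormal, ite_smul, one_smul, zero_smul]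
    at hcoeff
  refine (hasSum_ite_eq j (f j)).unique (hcoeff.congr_fun fun k => ?_)
  obtain rfl | hk := eq_or_ne k j
  · simp
  · simp [hk, hk.symm]

theorem exists_hasSum_tmul_and_iff {J : Type*} (b : HilbertBasis J ℂ H₂) (v : H)
    (P : (J → H₁) → Prop) :
    (∃ f : J → H₁, HasSum (fun j => T.tmul (f j) (b j)) v ∧ P f)
      ↔ P fun j => T.coeff (b j) v := by
  refine ⟨fun ⟨f, hf, hP⟩ => ?_, fun hP => ⟨_, T.hasSum_tmul_coeff b v, hP⟩⟩
  rwa [← funext (T.eq_coeff_of_hasSum b hf)]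

end HilbertTensor

theorem FT_isOpen_in_unitSphere_general
    (T : HilbertTensor H₁ H₂ H)
    {J : Type*} (b : HilbertBasis J ℂ H₂) (Tf : Finset J) :
    IsOpen {v : Metric.sphere (0 : H) 1 | ∃ f : J → H₁,
      HasSum (fun j => T.tmul (f j) (b j)) (v : H) ∧
      LinearIndependent ℂ fun j : Tf => f j.1} := by
  simp only [T.exists_hasSum_tmul_and_iff b]
  have hcoeff : Continuous fun v : Metric.sphere (0 : H) 1 => fun j : Tf => T.coeff (b j) v := by
    fun_prop
  exact isOpen_setOfPred_linearIndependent.preimage hcoeff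

/-- for an orthonormal basis `b` of `H₂` and a finite set `Tf` of basis indices,
the set `F(Tf)` of unit vectors `v = Σ_j f j ⊗ b j` whose coefficient vectors `{f j}_{j ∈ Tf}`
are linearly independent is open in the unit sphere of `H₁ ⊗ H₂` (norm topology). -/
theorem FT_isOpen_in_unitSphere
    [TopologicalSpace.SeparableSpace H₁] [TopologicalSpace.SeparableSpace H₂]
    (h₁ : 1 < Module.rank ℂ H₁) (h₂ : 1 < Module.rank ℂ H₂)
    (T : HilbertTensor H₁ H₂ H)
    {J : Type*} (b : HilbertBasis J ℂ H₂) (Tf : Finset J) :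
    IsOpen {v : Metric.sphere (0 : H) 1 | ∃ f : J → H₁,
      HasSum (fun j => T.tmul (f j) (b j)) (v : H) ∧
      LinearIndependent ℂ fun j : Tf => f j.1} :=
  FT_isOpen_in_unitSphere_general T b Tf

end
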